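/- If a graded poset P admits a triple assignment τ, then its ab-index equals the sum over all maximal chains c of P of the weight wt(c) = τ(x_0,x_1,x_2)·τ(x_1,x_2,x_3)⋯τ(x_{n-2},x_{n-1},x_n), a monomial in the non-commuting variables a and b. -/

import Mathlib

open Finset

section ChainDefs
variable {α : Type*} [PartialOrder α]

/-- `l` is a saturated (maximal) chain from `x` to `y`, given as a list. -/
def SatChain (x y : α) (l : List α) : Prop :=
  l.Chain' (· ⋖ ·) ∧ l.head? = some x ∧ l.getLast? = some y

/-- A chain is rising for `τ` (where `true` codes the letter 𝐚 and `false` codes 𝐛)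
if every consecutive triple is mapped to 𝐚. -/
def RisingOn (τ : α → α → α → Bool) (l : List α) : Prop :=
  ∀ (i : ℕ) (h : i + 2 < l.length),
    τ (l.get ⟨i, by omega⟩) (l.get ⟨i + 1, by omega⟩) (l.get ⟨i + 2, by omega⟩) = true

/-- A triple assignment: every non-trivial interval has a unique rising maximal chain. -/
def IsTripleAssignment (τ : α → α → α → Bool) : Prop :=
  ∀ x y : α, x < y → ∃! l : List α, SatChain x y l ∧ RisingOn τ l

/-- An `R`-labeling with label set `Λ` and relation `sim`: every non-trivial interval
has a unique maximal chain whose successive labels are related by `sim`. -/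
def IsRLabeling {Λ : Type*} (sim : Λ → Λ → Prop) (lab : α → α → Λ) : Prop :=
  ∀ x y : α, x < y → ∃! l : List α,
    SatChain x y l ∧ ∀ (i : ℕ) (h : i + 2 < l.length),
      sim (lab (l.get ⟨i, by omega⟩) (l.get ⟨i + 1, by omega⟩))
          (lab (l.get ⟨i + 1, by omega⟩) (l.get ⟨i + 2, by omega⟩))

/-- `y` is a breakpoint for `τ`: the value `τ x y z` does not depend on `x ⋖ y` and `y ⋖ z`. -/
def IsBreakpoint (τ : α → α → α → Bool) (y : α) : Prop :=
  ∃ v : Bool, ∀ x z : α, x ⋖ y → y ⋖ z → τ x y z = v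

end ChainDefs

section FlagDefs
variable {α : Type*} [PartialOrder α] [BoundedOrder α]

/-- `rk` is a rank function making the bounded poset graded. -/
def IsGraded (rk : α → ℕ) : Prop :=
  rk ⊥ = 0 ∧ ∀ x y : α, x ⋖ y → rk y = rk x + 1

/-- Flag `f`-vector entry: the number of chains `0̂ < x₁ < ⋯ < x_k < 1̂`
passing exactly through the ranks in `S`. -/
noncomputable def flagF (rk : α → ℕ) (S : Finset ℕ) : ℕ :=
  Nat.card {c : Finset α // IsChain (· ≤ ·) (↑c : Set α) ∧ c.image rk = S ∧
    c.card = S.card ∧ ∀ x ∈ c, ⊥ < x ∧ x < ⊤}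

/-- Flag `h`-vector entry: `h_S = ∑_{T ⊆ S} (-1)^{|S∖T|} f_T`. -/
noncomputable def flagH (rk : α → ℕ) (S : Finset ℕ) : ℤ :=
  ∑ T ∈ S.powerset, (-1) ^ (S.card - T.card) * (flagF rk T : ℤ)

/-- The descent set of a maximal chain `0̂ = x₀ ⋖ x₁ ⋖ ⋯ ⋖ x_n = 1̂` with respect to `τ`:
those `i` with `τ (x_{i-1}) (x_i) (x_{i+1}) = 𝐛`. -/
def descSet (τ : α → α → α → Bool) (l : List α) : Finset ℕ :=
  (Finset.Icc 1 (l.length - 2)).filter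
    (fun i => τ (l.getD (i - 1) ⊥) (l.getD i ⊥) (l.getD (i + 1) ⊥) = false)

end FlagDefs

/-- The butterfly poset `T_n`: one element at ranks `0` and `n` and two elements
(`side = true/false`) at each rank `1 ≤ i ≤ n-1`; any two elements of distinct
ranks are comparable. -/
structure Butt (n : ℕ) where
  rk : ℕ
  side : Bool
  hle : rk ≤ n
  hb : rk = 0 ∨ rk = n → side = false

theorem Butt.ext' {n : ℕ} {x y : Butt n} (h1 : x.rk = y.rk) (h2 : x.side = y.side) :
    x = y := by
  cases x; cases y; simp_all

instance {n : ℕ} : PartialOrder (Butt n) where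
  le x y := x = y ∨ x.rk < y.rk
  le_refl x := Or.inl rfl
  le_trans x y z hxy hyz := by
    rcases hxy with rfl | h
    · exact hyz
    · rcases hyz with rfl | h'
      · exact Or.inr h
      · exact Or.inr (h.trans h')
  le_antisymm x y hxy hyx := by
    rcases hxy with rfl | h
    · rfl
    · rcases hyx with rfl | h'
      · rfl
      · omega

instance {n : ℕ} : BoundedOrder (Butt n) where
  bot := ⟨0, false, Nat.zero_le n, fun _ => rfl⟩
  top := ⟨n, false, le_refl n, fun _ => rfl⟩
  bot_le x := by
    by_cases h : x.rk = 0
    · exact Or.inl (Butt.ext' h.symm (x.hb (Or.inl h)).symm)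
    · exact Or.inr (by simpa using Nat.pos_of_ne_zero h)
  le_top x := by
    by_cases h : x.rk = n
    · exact Or.inl (Butt.ext' h (x.hb (Or.inr h)))
    · exact Or.inr (lt_of_le_of_ne x.hle h)

/-- The poset `P_n`: two copies (`copy = true/false`) of the butterfly poset `T_n`
glued along their minimum and maximum elements. -/
structure Glue (n : ℕ) where
  rk : ℕ
  side : Bool
  copy : Bool
  hle : rk ≤ n
  hb : rk = 0 ∨ rk = n → side = false ∧ copy = false

theorem Glue.ext' {n : ℕ} {x y : Glue n} (h1 : x.rk = y.rk) (h2 : x.side = y.side)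
    (h3 : x.copy = y.copy) : x = y := by
  cases x; cases y; simp_all

instance {n : ℕ} : PartialOrder (Glue n) where
  le x y := x = y ∨ (x.rk < y.rk ∧ (x.copy = y.copy ∨ x.rk = 0 ∨ y.rk = n))
  le_refl x := Or.inl rfl
  le_trans x y z hxy hyz := by
    rcases hxy with rfl | ⟨h1, h2⟩
    · exact hyz
    · rcases hyz with rfl | ⟨h3, h4⟩
      · exact Or.inr ⟨h1, h2⟩
      · refine Or.inr ⟨h1.trans h3, ?_⟩
        rcases h2 with hc | h0 | hn
        · rcases h4 with hc' | h0' | hn'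
          · exact Or.inl (hc.trans hc')
          · omega
          · exact Or.inr (Or.inr hn')
        · exact Or.inr (Or.inl h0)
        · have := z.hle; omega
  le_antisymm x y hxy hyx := by
    rcases hxy with rfl | ⟨h1, _⟩
    · rfl
    · rcases hyx with rfl | ⟨h2, _⟩
      · rfl
      · omega

instance {n : ℕ} : BoundedOrder (Glue n) where
  bot := ⟨0, false, false, Nat.zero_le n, fun _ => ⟨rfl, rfl⟩⟩
  top := ⟨n, false, false, le_refl n, fun _ => ⟨rfl, rfl⟩⟩
  bot_le x := by
    by_cases h : x.rk = 0
    · exact Or.inl (Glue.ext' h.symm (x.hb (Or.inl h)).1.symm (x.hb (Or.inl h)).2.symm)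
    · exact Or.inr ⟨by simpa using Nat.pos_of_ne_zero h, Or.inr (Or.inl rfl)⟩
  le_top x := by
    by_cases h : x.rk = n
    · exact Or.inl (Glue.ext' h (x.hb (Or.inr h)).1 (x.hb (Or.inr h)).2)
    · exact Or.inr ⟨lt_of_le_of_ne x.hle h, Or.inr (Or.inr rfl)⟩

/-- Eulerian condition (counting form): every non-trivial interval has as many
elements of even rank as of odd rank. -/
def EulerianCount {α : Type*} [PartialOrder α] (rk : α → ℕ) : Prop :=
  ∀ x y : α, x < y →
    Nat.card {z : α // z ∈ Set.Icc x y ∧ Even (rk z - rk x)} =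
    Nat.card {z : α // z ∈ Set.Icc x y ∧ ¬ Even (rk z - rk x)}

section AbIndex

/-- The variable 𝐚 of the non-commutative polynomial ring `ℤ⟨𝐚,𝐛⟩`,
realized as the monoid algebra of the free monoid on two letters. -/
noncomputable def abA : MonoidAlgebra ℤ (FreeMonoid Bool) :=
  MonoidAlgebra.single (FreeMonoid.ofList [true]) 1

/-- The variable 𝐛. -/
noncomputable def abB : MonoidAlgebra ℤ (FreeMonoid Bool) :=
  MonoidAlgebra.single (FreeMonoid.ofList [false]) 1

/-- The 𝐚𝐛-monomial `u_S` of length `n-1`, with 𝐛 in the positions of `S`. -/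
def abMonomial (n : ℕ) (S : Finset ℕ) : FreeMonoid Bool :=
  FreeMonoid.ofList ((List.range (n - 1)).map (fun j => decide ((j + 1) ∉ S)))

/-- The 𝐚𝐛-index `Ψ(P) = ∑_S h_S u_S` of a bounded poset of rank `n`
with rank function `rk`. -/
noncomputable def abIndex {α : Type*} [PartialOrder α] [BoundedOrder α]
    (rk : α → ℕ) (n : ℕ) : MonoidAlgebra ℤ (FreeMonoid Bool) :=
  ∑ S ∈ (Finset.Icc 1 (n - 1)).powerset,
    MonoidAlgebra.single (abMonomial n S) (flagH rk S)

/-- The weight `wt(c)` of a maximal chain, as an 𝐚𝐛-monomial. -/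
def chainWeight {α : Type*} [PartialOrder α] [OrderBot α]
    (τ : α → α → α → Bool) (l : List α) : FreeMonoid Bool :=
  FreeMonoid.ofList ((List.range (l.length - 2)).map
    (fun i => τ (l.getD i ⊥) (l.getD (i + 1) ⊥) (l.getD (i + 2) ⊥)))

end AbIndex

/-! Grouping the maximal chains `c` by their descent set `D(c)`, the weight of `c` is `u_{D(c)}`,
so the claim is `h_S = #{c | D(c) = S}`; by inclusion–exclusion on the Boolean lattice this
amounts to `f_S = #{c | D(c) ⊆ S}`. Restriction to the ranks in `S` is a bijection between the
maximal chains with `D(c) ⊆ S` and the chains with rank set `S`: such a `c` is the concatenation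
of the unique rising chains between consecutive elements of its restriction, and filling the gaps
of any chain with rank set `S` by rising chains gives a maximal chain with descents only in `S`. -/

namespace List
variable {α : Type*} {a b c y : α} {l p q : List α}

theorem triple_infix_append_cons (h : [a, b, c] <:+: p ++ y :: q) :
    [a, b, c] <:+: p ++ [y] ∨ [a, b, c] <:+: y :: q ∨ b = y := by
  induction p with
  | nil => simp_all
  | cons e p ih =>
    rcases infix_cons_iff.mp h with h | h
    · rcases p with _ | ⟨f, _ | ⟨g, p⟩⟩ <;> simp_all [IsPrefix.isInfix]
    · rcases ih h with h | h | h
      · exact Or.inl (infix_cons h)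
      · exact Or.inr (Or.inl h)
      · exact Or.inr (Or.inr h)

theorem triple_infix_iff_getElem : [a, b, c] <:+: l ↔
    ∃ (i : ℕ) (h : i + 2 < l.length), l[i] = a ∧ l[i + 1] = b ∧ l[i + 2] = c := by
  rw [infix_iff_getElem?]
  constructor
  · rintro ⟨k, hk, h⟩
    obtain ⟨_, h0⟩ := getElem?_eq_some_iff.mp (h 0 (by simp))
    obtain ⟨_, h1⟩ := getElem?_eq_some_iff.mp (h 1 (by simp))
    obtain ⟨_, h2⟩ := getElem?_eq_some_iff.mp (h 2 (by simp))
    simp only [length_cons, length_nil] at hk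
    refine ⟨k, by omega, ?_⟩
    simp_all [Nat.add_comm]
  · rintro ⟨i, hi, rfl, rfl, rfl⟩
    refine ⟨i, by simp; omega, fun j hj => ?_⟩
    simp only [length_cons, length_nil] at hj
    interval_cases j <;> simp [Nat.add_comm]

theorem Pairwise.of_triple_infix {R : α → α → Prop} (h : l.Pairwise R)
    (habc : [a, b, c] <:+: l) : R a b ∧ R b c := by
  have := h.sublist habc.sublist
  simp_all

theorem Pairwise.isChain_setOf_mem {R : α → α → Prop} (h : l.Pairwise R) :
    _root_.IsChain R {x | x ∈ l} := by
  induction l with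
  | nil => simp
  | cons c l ih =>
    obtain ⟨hc, hl⟩ := pairwise_cons.mp h
    rintro a (_ | ⟨_, ha⟩) b (_ | ⟨_, hb⟩) hab
    exacts [absurd rfl hab, Or.inl (hc b hb), Or.inr (hc a ha), ih hl ha hb hab]

end List

section Descents
variable {α : Type*} {τ : α → α → α → Bool} {P Q : α → Prop} {y : α} {l p q : List α}

variable (τ) in
def DescentsIn (P : α → Prop) (l : List α) : Prop :=
  ∀ a b c, [a, b, c] <:+: l → τ a b c = false → P b

lemma risingOn_iff_descentsIn [PartialOrder α] :
    RisingOn τ l ↔ DescentsIn τ (fun _ => False) l := by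
  simp only [RisingOn, DescentsIn, List.triple_infix_iff_getElem, List.get_eq_getElem,
    Bool.not_eq_false, imp_false]
  constructor
  · rintro h a b c ⟨i, hi, rfl, rfl, rfl⟩
    exact h i hi
  · exact fun h i hi => h _ _ _ ⟨i, hi, rfl, rfl, rfl⟩

lemma DescentsIn.mono (h : DescentsIn τ P l) (hPQ : ∀ b ∈ l, P b → Q b) : DescentsIn τ Q l :=
  fun a b c habc hτ => hPQ b (habc.subset (by simp)) (h a b c habc hτ)

lemma DescentsIn.append_cons (hp : DescentsIn τ P (p ++ [y])) (hq : DescentsIn τ P (y :: q))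
    (hy : P y) : DescentsIn τ P (p ++ y :: q) := by
  intro a b c habc hτ
  rcases List.triple_infix_append_cons habc with h | h | rfl
  exacts [hp a b c h hτ, hq a b c h hτ, hy]

end Descents

section SatChain
variable {α : Type*} [PartialOrder α] {x y z w : α} {l p q : List α}

lemma satChain_iff :
    SatChain x y l ↔ l.IsChain (· ⋖ ·) ∧ l.head? = some x ∧ l.getLast? = some y :=
  Iff.rfl

lemma SatChain.ne_nil (h : SatChain x y l) : l ≠ [] := by
  rintro rfl
  simp [SatChain] at h

lemma SatChain.pairwise_lt (h : SatChain x y l) : l.Pairwise (· < ·) :=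
  List.isChain_iff_pairwise.mp (h.1.imp fun _ _ => CovBy.lt)

lemma SatChain.exists_eq_cons (h : SatChain x y l) : ∃ q, l = x :: q := by
  obtain ⟨a, q, rfl⟩ := List.exists_cons_of_ne_nil h.ne_nil
  obtain rfl : a = x := by simpa using h.2.1
  exact ⟨q, rfl⟩

lemma SatChain.dropLast_append (h : SatChain x y l) : l.dropLast ++ [y] = l := by
  have hy : l.getLast h.ne_nil = y := by simpa [List.getLast?_eq_some_getLast h.ne_nil] using h.2.2
  rw [← hy, List.dropLast_append_getLast]

lemma SatChain.le (h : SatChain x y l) : x ≤ y := by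
  obtain ⟨q, rfl⟩ := h.exists_eq_cons
  rcases List.mem_cons.mp (List.mem_of_getLast? h.2.2) with rfl | hy
  exacts [le_rfl, ((List.pairwise_cons.mp h.pairwise_lt).1 y hy).le]

lemma satChain_singleton (x : α) : SatChain x x [x] :=
  ⟨List.isChain_singleton x, rfl, rfl⟩

lemma SatChain.eq_singleton (h : SatChain x x l) : l = [x] := by
  obtain ⟨_ | ⟨b, q⟩, rfl⟩ := h.exists_eq_cons
  · rfl
  · have hx : x ∈ b :: q := List.mem_of_getLast? (List.getLast?_cons_cons ▸ h.2.2)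
    exact absurd ((List.pairwise_cons.mp h.pairwise_lt).1 x hx) (lt_irrefl x)

lemma satChain_append_cons_iff :
    SatChain x z (p ++ y :: q) ↔ SatChain x y (p ++ [y]) ∧ SatChain y z (y :: q) := by
  simp only [satChain_iff]
  rw [List.isChain_split]
  simp [List.head?_append]
  tauto

lemma SatChain.nodup (h : SatChain x y l) : l.Nodup :=
  h.pairwise_lt.imp ne_of_lt

lemma SatChain.le_of_mem (h : SatChain x y l) (hw : w ∈ l) : w ≤ y := by
  have hl := h.pairwise_lt
  rw [← h.dropLast_append, List.pairwise_append] at hl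
  rw [← h.dropLast_append, List.mem_append, List.mem_singleton] at hw
  rcases hw with hw | rfl
  exacts [(hl.2.2 w hw y (by simp)).le, le_rfl]

lemma SatChain.ge_of_mem (h : SatChain x y l) (hw : w ∈ l) : x ≤ w := by
  obtain ⟨q, rfl⟩ := h.exists_eq_cons
  rcases List.mem_cons.mp hw with rfl | hw
  exacts [le_rfl, ((List.pairwise_cons.mp h.pairwise_lt).1 w hw).le]

lemma finite_setOf_satChain [Finite α] (x y : α) : {l : List α | SatChain x y l}.Finite := by
  cases nonempty_fintype α
  exact (List.finite_length_le α (Fintype.card α)).subset fun l hl => hl.nodup.length_le_card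

noncomputable def satChains [Finite α] (x y : α) : Finset (List α) :=
  (finite_setOf_satChain x y).toFinset

lemma mem_satChains [Finite α] : l ∈ satChains x y ↔ SatChain x y l :=
  Set.Finite.mem_toFinset _

end SatChain

section ChainThrough
variable {α : Type*} [PartialOrder α] {τ : α → α → α → Bool} {x y z : α} {s l : List α}

lemma IsTripleAssignment.existsUnique (hτ : IsTripleAssignment τ) (hxy : x ≤ y) :
    ∃! l, SatChain x y l ∧ RisingOn τ l := by
  rcases hxy.eq_or_lt with rfl | hxy
  · exact ⟨[x], ⟨satChain_singleton x, fun i hi => by simp at hi⟩, fun l hl => hl.1.eq_singleton⟩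
  · exact hτ x y hxy

variable (τ) in
open Classical in
noncomputable def risingChain (x y : α) : List α :=
  if h : ∃ l, SatChain x y l ∧ RisingOn τ l then h.choose else [x]

lemma risingChain_spec (hτ : IsTripleAssignment τ) (hxy : x ≤ y) :
    SatChain x y (risingChain τ x y) ∧ RisingOn τ (risingChain τ x y) := by
  have h := (hτ.existsUnique hxy).exists
  rw [risingChain, dif_pos h]
  exact h.choose_spec

lemma eq_risingChain (hτ : IsTripleAssignment τ) (hl : SatChain x y l) (hr : RisingOn τ l) :
    l = risingChain τ x y :=
  (hτ.existsUnique hl.le).unique ⟨hl, hr⟩ (risingChain_spec hτ hl.le)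

variable (τ) in
noncomputable def chainThrough : α → List α → α → List α
  | x, [], z => risingChain τ x z
  | x, y :: s, z => (risingChain τ x y).dropLast ++ chainThrough y s z

lemma chainThrough_spec (hτ : IsTripleAssignment τ) (hs : (x :: s).Pairwise (· < ·))
    (hz : ∀ w ∈ x :: s, w ≤ z) :
    SatChain x z (chainThrough τ x s z) ∧ (∀ w ∈ s, w ∈ chainThrough τ x s z) ∧
      DescentsIn τ (· ∈ s) (chainThrough τ x s z) := by
  induction s generalizing x with
  | nil =>
    obtain ⟨hsat, hrise⟩ := risingChain_spec hτ (hz x (by simp))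
    exact ⟨hsat, by simp, (risingOn_iff_descentsIn.mp hrise).mono (by simp)⟩
  | cons y s ih =>
    obtain ⟨hxs, hys⟩ := List.pairwise_cons.mp hs
    obtain ⟨hsat, hmem, hdesc⟩ := ih hys fun w hw => hz w (List.mem_cons_of_mem x hw)
    obtain ⟨hr, hrise⟩ := risingChain_spec hτ (hxs y (by simp)).le
    obtain ⟨q, hq⟩ := hsat.exists_eq_cons
    have hsplit := hr.dropLast_append
    rw [chainThrough]
    rw [hq] at hsat hmem hdesc ⊢
    refine ⟨satChain_append_cons_iff.mpr ⟨by rwa [hsplit], hsat⟩, ?_, ?_⟩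
    · rintro w (_ | ⟨_, hw⟩)
      · simp
      · exact List.mem_append_right _ (hmem w hw)
    · refine DescentsIn.append_cons ?_ (hdesc.mono fun b _ hb => List.mem_cons_of_mem y hb)
        (by simp)
      rw [hsplit]
      exact (risingOn_iff_descentsIn.mp hrise).mono (by simp)

lemma eq_chainThrough (hτ : IsTripleAssignment τ) (hs : (x :: s).Pairwise (· < ·))
    (hl : SatChain x z l) (hsl : ∀ w ∈ s, w ∈ l) (hd : DescentsIn τ (· ∈ s) l) :
    l = chainThrough τ x s z := by
  induction s generalizing x l with
  | nil => exact eq_risingChain hτ hl (risingOn_iff_descentsIn.mpr (hd.mono (by simp)))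
  | cons y s ih =>
    have hys : ∀ w ∈ s, y < w := (List.pairwise_cons.mp (List.pairwise_cons.mp hs).2).1
    obtain ⟨p, q, rfl⟩ := List.append_of_mem (hsl y (by simp))
    obtain ⟨hp, hq⟩ := satChain_append_cons_iff.mp hl
    have hpy : ∀ a ∈ p, a < y := fun a ha =>
      (List.pairwise_append.mp hp.pairwise_lt).2.2 a ha y (by simp)
    -- a descent of `p ++ [y]` has its middle below `y`, hence outside `y :: s`
    have hrise : RisingOn τ (p ++ [y]) := by
      refine risingOn_iff_descentsIn.mpr fun a b c habc hτabc => ?_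
      have hby : b < y :=
        (hp.pairwise_lt.of_triple_infix habc).2.trans_le (hp.le_of_mem (habc.subset (by simp)))
      rcases List.mem_cons.mp (hd a b c (habc.trans (List.prefix_append_right_inj p |>.mpr
        (by simp)).isInfix) hτabc) with rfl | hb
      exacts [lt_irrefl b hby, lt_asymm hby (hys b hb)]
    have hq' : y :: q = chainThrough τ y s z := by
      refine ih (List.pairwise_cons.mp hs).2 hq (fun w hw => ?_) fun a b c habc hτabc => ?_
      · rcases List.mem_append.mp (hsl w (List.mem_cons_of_mem y hw)) with hwp | hwq
        exacts [absurd (hpy w hwp) (lt_asymm (hys w hw)), hwq]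
      · have hyb : y < b := (hq.ge_of_mem (habc.subset (by simp))).trans_lt
          (hq.pairwise_lt.of_triple_infix habc).1
        rcases List.mem_cons.mp (hd a b c (habc.trans (List.suffix_append p _).isInfix) hτabc)
          with rfl | hb
        exacts [absurd hyb (lt_irrefl b), hb]
    rw [chainThrough, ← hq', ← eq_risingChain hτ hp hrise, List.dropLast_concat]

end ChainThrough

section Rank
variable {α : Type*} [PartialOrder α] {rk : α → ℕ} {x y : α} {l : List α}

lemma SatChain.rk_getElem (hcov : ∀ a b : α, a ⋖ b → rk b = rk a + 1) (h : SatChain x y l) :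
    ∀ (i : ℕ) (hi : i < l.length), rk l[i] = rk x + i
  | 0, _ => by
    obtain ⟨q, rfl⟩ := h.exists_eq_cons
    rfl
  | i + 1, hi => by
    rw [hcov _ _ (List.isChain_iff_getElem.mp h.1 i hi), h.rk_getElem hcov i (by omega)]
    rfl

lemma SatChain.rk_add_length (hcov : ∀ a b : α, a ⋖ b → rk b = rk a + 1) (h : SatChain x y l) :
    rk x + l.length = rk y + 1 := by
  have hy : l.getLast h.ne_nil = y := by simpa [List.getLast?_eq_some_getLast h.ne_nil] using h.2.2
  have hpos := List.length_pos_iff.mpr h.ne_nil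
  have hlast := h.rk_getElem hcov (l.length - 1) (by omega)
  rw [← List.getLast_eq_getElem h.ne_nil, hy] at hlast
  omega

lemma SatChain.injOn_rk (hcov : ∀ a b : α, a ⋖ b → rk b = rk a + 1) (h : SatChain x y l) :
    Set.InjOn rk {w | w ∈ l} := by
  rintro _ hv _ hw hvw
  obtain ⟨i, hi, rfl⟩ := List.mem_iff_getElem.mp hv
  obtain ⟨j, hj, rfl⟩ := List.mem_iff_getElem.mp hw
  rw [h.rk_getElem hcov, h.rk_getElem hcov] at hvw
  simp only [show i = j by omega]

lemma SatChain.exists_mem_rk_eq (hcov : ∀ a b : α, a ⋖ b → rk b = rk a + 1) (h : SatChain x y l)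
    {t : ℕ} (hxt : rk x ≤ t) (hty : t ≤ rk y) : ∃ w ∈ l, rk w = t := by
  have := h.rk_add_length hcov
  exact ⟨l[t - rk x], List.getElem_mem _, by rw [h.rk_getElem hcov]; omega⟩

end Rank

section DescentSet
variable {α : Type*} [PartialOrder α] [BoundedOrder α] {τ : α → α → α → Bool} {rk : α → ℕ}
  {y : α} {l : List α} {T : Finset ℕ} {i : ℕ}

lemma mem_descSet : i ∈ descSet τ l ↔
    ∃ h : i + 1 < l.length, 1 ≤ i ∧ τ l[i - 1] l[i] l[i + 1] = false := by
  simp only [descSet, Finset.mem_filter, Finset.mem_Icc]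
  constructor
  · rintro ⟨⟨h1, h2⟩, hτ⟩
    refine ⟨by omega, h1, ?_⟩
    rwa [List.getD_eq_getElem _ _ (by omega), List.getD_eq_getElem _ _ (by omega),
      List.getD_eq_getElem _ _ (by omega)] at hτ
  · rintro ⟨h, h1, hτ⟩
    refine ⟨⟨h1, by omega⟩, ?_⟩
    rwa [List.getD_eq_getElem _ _ (by omega), List.getD_eq_getElem _ _ (by omega),
      List.getD_eq_getElem _ _ h]

variable (τ) in
lemma descSet_subset_Icc (l : List α) : descSet τ l ⊆ Finset.Icc 1 (l.length - 2) :=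
  Finset.filter_subset _ _

lemma chainWeight_eq_abMonomial (l : List α) :
    chainWeight τ l = abMonomial (l.length - 1) (descSet τ l) := by
  rw [chainWeight, abMonomial, show l.length - 1 - 1 = l.length - 2 by omega]
  congr 1
  refine List.map_congr_left fun j hj => ?_
  have hj : j + 2 < l.length := by rw [List.mem_range] at hj; omega
  have hdesc : j + 1 ∈ descSet τ l ↔ τ l[j] l[j + 1] l[j + 2] = false := by
    rw [mem_descSet]
    simp [hj]
  rw [List.getD_eq_getElem _ _ (by omega), List.getD_eq_getElem _ _ (by omega),
    List.getD_eq_getElem _ _ hj]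
  cases hb : τ l[j] l[j + 1] l[j + 2] <;> simp_all

lemma descSet_subset_iff_descentsIn (hg : IsGraded rk) (h : SatChain ⊥ y l) :
    descSet τ l ⊆ T ↔ DescentsIn τ (fun b => rk b ∈ T) l := by
  have hrk : ∀ (i : ℕ) (hi : i < l.length), rk l[i] = i := fun i hi => by
    rw [h.rk_getElem hg.2, hg.1, zero_add]
  constructor
  · rintro hT a b c habc hτ
    obtain ⟨i, hi, rfl, rfl, rfl⟩ := List.triple_infix_iff_getElem.mp habc
    rw [hrk]
    exact hT (mem_descSet.mpr ⟨by omega, by omega, by simpa using hτ⟩)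
  · intro hd i hi
    obtain ⟨hi, h1, hτ⟩ := mem_descSet.mp hi
    have hmid : rk l[i] ∈ T := hd _ _ _ (List.triple_infix_iff_getElem.mpr ⟨i - 1, by omega, rfl,
      by simp [Nat.sub_add_cancel h1], by simp [show i - 1 + 2 = i + 1 by omega]⟩) hτ
    rwa [hrk] at hmid

end DescentSet

lemma IsChain.exists_pairwise_lt_toFinset_eq {α : Type*} [PartialOrder α] [DecidableEq α] {c : Finset α}
    (hc : IsChain (· ≤ ·) (c : Set α)) : ∃ s : List α, s.Pairwise (· < ·) ∧ s.toFinset = c := by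
  induction c using Finset.strongInduction with
  | H c ih =>
    rcases c.eq_empty_or_nonempty with rfl | hne
    · exact ⟨[], List.Pairwise.nil, rfl⟩
    obtain ⟨m, hm⟩ := Finset.exists_maximal hne
    obtain ⟨s, hs, hsc⟩ := ih (c.erase m) (Finset.erase_ssubset hm.prop) (hc.mono (by simp))
    refine ⟨s ++ [m], List.pairwise_append.mpr ⟨hs, by simp, fun a ha b hb => ?_⟩, ?_⟩
    · obtain rfl := List.mem_singleton.mp hb
      obtain ⟨hab, hac⟩ := Finset.mem_erase.mp (hsc ▸ List.mem_toFinset.mpr ha)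
      exact (hc.total hac hm.prop).elim (lt_of_le_of_ne · hab)
        fun h => absurd (hm.eq_of_ge hac h) hab
    · simp [hsc, Finset.insert_erase hm.prop]

section Flags
variable {α : Type*} [PartialOrder α] [BoundedOrder α]

def IsFlag (rk : α → ℕ) (S : Finset ℕ) (c : Finset α) : Prop :=
  IsChain (· ≤ ·) (↑c : Set α) ∧ c.image rk = S ∧ c.card = S.card ∧ ∀ x ∈ c, ⊥ < x ∧ x < ⊤

lemma flagF_eq_natCard (rk : α → ℕ) (S : Finset ℕ) :
    flagF rk S = Nat.card {c : Finset α // IsFlag rk S c} :=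
  rfl

variable [DecidableEq α] {rk : α → ℕ} {n : ℕ} {S : Finset ℕ} {l : List α}

lemma SatChain.isFlag_toFinset_filter (hg : IsGraded rk) (htop : rk ⊤ = n)
    (hS : S ⊆ Finset.Icc 1 (n - 1)) (h : SatChain ⊥ ⊤ l) :
    IsFlag rk S (l.toFinset.filter (rk · ∈ S)) := by
  have hsub : (↑(l.toFinset.filter (rk · ∈ S)) : Set α) ⊆ {w | w ∈ l} :=
    fun w hw => List.mem_toFinset.mp (Finset.mem_filter.mp hw).1
  have himage : (l.toFinset.filter (rk · ∈ S)).image rk = S := by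
    refine Finset.Subset.antisymm
      (Finset.image_subset_iff.mpr fun w hw => (Finset.mem_filter.mp hw).2) fun t ht => ?_
    have ht' := Finset.mem_Icc.mp (hS ht)
    obtain ⟨w, hw, rfl⟩ :=
      h.exists_mem_rk_eq (t := t) hg.2 (by rw [hg.1]; omega) (by rw [htop]; omega)
    exact Finset.mem_image_of_mem rk (Finset.mem_filter.mpr ⟨List.mem_toFinset.mpr hw, ht⟩)
  refine ⟨(h.pairwise_lt.isChain_setOf_mem.mono hsub).mono_rel fun _ _ => le_of_lt, himage, ?_,
    fun w hw => ?_⟩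
  · rw [← Finset.card_image_of_injOn ((h.injOn_rk hg.2).mono hsub), himage]
  · have hw' := Finset.mem_Icc.mp (hS (Finset.mem_filter.mp hw).2)
    refine ⟨bot_lt_iff_ne_bot.mpr ?_, lt_top_iff_ne_top.mpr ?_⟩ <;> rintro rfl
    · rw [hg.1] at hw'
      omega
    · rw [htop] at hw'
      omega

end Flags

section Counting
variable {α : Type*} [PartialOrder α] [BoundedOrder α] {τ : α → α → α → Bool} {rk : α → ℕ}
  {n : ℕ} {S : Finset ℕ} {z : α} {l : List α}

lemma SatChain.eq_chainThrough_filter (hτ : IsTripleAssignment τ) (hg : IsGraded rk)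
    (h : SatChain ⊥ z l) (hS : 0 ∉ S) (hd : descSet τ l ⊆ S) :
    l = chainThrough τ ⊥ (l.filter (rk · ∈ S)) z := by
  refine eq_chainThrough hτ (List.pairwise_cons.mpr ⟨fun w hw => ?_,
    h.pairwise_lt.sublist List.filter_sublist⟩) h (fun w hw => List.mem_of_mem_filter hw)
    (((descSet_subset_iff_descentsIn hg h).mp hd).mono fun b hb hbS =>
      List.mem_filter.mpr ⟨hb, by simpa using hbS⟩)
  refine bot_lt_iff_ne_bot.mpr ?_
  rintro rfl
  exact hS (by simpa [hg.1] using (List.mem_filter.mp hw).2)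

variable [Finite α]

lemma flagF_eq_card_descSet_subset (hτ : IsTripleAssignment τ) (hg : IsGraded rk)
    (htop : rk ⊤ = n) (hS : S ⊆ Finset.Icc 1 (n - 1)) :
    flagF rk S = #{l ∈ satChains (⊥ : α) ⊤ | descSet τ l ⊆ S} := by
  classical
  have hS0 : 0 ∉ S := fun h0 => by simpa using hS h0
  rw [flagF_eq_natCard, ← Nat.card_eq_finsetCard]
  symm
  refine Nat.card_eq_of_bijective (fun l => ⟨l.1.toFinset.filter (rk · ∈ S), ?_⟩) ⟨?_, ?_⟩
  · exact (mem_satChains.mp (Finset.mem_filter.mp l.2).1).isFlag_toFinset_filter hg htop hS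
  · rintro ⟨l, hl⟩ ⟨m, hm⟩ hlm
    simp only [Finset.mem_filter, mem_satChains, Subtype.mk.injEq] at hl hm hlm ⊢
    have hf : l.filter (rk · ∈ S) = m.filter (rk · ∈ S) :=
      List.Perm.eq_of_pairwise (fun a b _ _ hab hba => le_antisymm hab.le hba.le)
        (hl.1.pairwise_lt.sublist List.filter_sublist)
        (hm.1.pairwise_lt.sublist List.filter_sublist)
        (List.perm_of_nodup_nodup_toFinset_eq (hl.1.nodup.filter _) (hm.1.nodup.filter _)
          (by simpa [List.toFinset_filter] using hlm))
    calc l = chainThrough τ ⊥ (l.filter (rk · ∈ S)) ⊤ := hl.1.eq_chainThrough_filter hτ hg hS0 hl.2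
      _ = chainThrough τ ⊥ (m.filter (rk · ∈ S)) ⊤ := by rw [hf]
      _ = m := (hm.1.eq_chainThrough_filter hτ hg hS0 hm.2).symm
  · rintro ⟨c, hc_chain, hc_image, -, hc_bounds⟩
    obtain ⟨s, hs, hsc⟩ := hc_chain.exists_pairwise_lt_toFinset_eq
    have hmem : ∀ w, w ∈ s ↔ w ∈ c := fun w => by rw [← hsc, List.mem_toFinset]
    obtain ⟨hsat, hsl, hd⟩ := chainThrough_spec hτ
      (List.pairwise_cons.mpr ⟨fun w hw => (hc_bounds w ((hmem w).mp hw)).1, hs⟩) fun _ _ => le_top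
    have hdesc : descSet τ (chainThrough τ ⊥ s ⊤) ⊆ S :=
      (descSet_subset_iff_descentsIn hg hsat).mpr (hd.mono fun b _ hb =>
        hc_image ▸ Finset.mem_image_of_mem rk ((hmem b).mp hb))
    refine ⟨⟨chainThrough τ ⊥ s ⊤, Finset.mem_filter.mpr ⟨mem_satChains.mpr hsat, hdesc⟩⟩,
      Subtype.ext (Finset.ext fun w => ?_)⟩
    simp only [Finset.mem_filter, List.mem_toFinset]
    constructor
    · rintro ⟨hw, hwS⟩
      obtain ⟨v, hv, hvw⟩ := Finset.mem_image.mp (hc_image ▸ hwS)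
      rwa [hsat.injOn_rk hg.2 hw (hsl v ((hmem v).mpr hv)) hvw.symm]
    · exact fun hw => ⟨hsl w ((hmem w).mpr hw), hc_image ▸ Finset.mem_image_of_mem rk hw⟩

end Counting

section PowersetInversion
variable {ι R : Type*} [DecidableEq ι] [CommRing R]

lemma sum_Icc_neg_one_pow_card_sub {U S : Finset ι} (hUS : U ⊆ S) :
    ∑ T ∈ Finset.Icc U S, (-1 : R) ^ (#S - #T) = if U = S then 1 else 0 := by
  calc ∑ T ∈ Finset.Icc U S, (-1 : R) ^ (#S - #T)
      = ∑ V ∈ (S \ U).powerset, (-1 : R) ^ #V := by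
        refine Finset.sum_nbij' (S \ ·) (S \ ·) (fun T hT => ?_) (fun V hV => ?_)
          (fun T hT => ?_) (fun V hV => ?_) (fun T hT => ?_)
        · simp only [Finset.mem_Icc, Finset.mem_powerset] at hT ⊢
          exact Finset.sdiff_subset_sdiff le_rfl hT.1
        · simp only [Finset.mem_Icc, Finset.mem_powerset] at hV ⊢
          exact ⟨fun u hu => Finset.mem_sdiff.mpr ⟨hUS hu, fun hv => (Finset.mem_sdiff.mp
            (hV hv)).2 hu⟩, Finset.sdiff_subset⟩
        · exact Finset.sdiff_sdiff_eq_self (Finset.mem_Icc.mp hT).2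
        · exact Finset.sdiff_sdiff_eq_self ((Finset.mem_powerset.mp hV).trans Finset.sdiff_subset)
        · rw [Finset.card_sdiff_of_subset (Finset.mem_Icc.mp hT).2]
    _ = if U = S then 1 else 0 := by
        have h := congrArg (Int.cast : ℤ → R) (Finset.sum_powerset_neg_one_pow_card (x := S \ U))
        push_cast at h
        rw [h]
        exact if_congr (Finset.sdiff_eq_empty_iff_subset.trans ⟨hUS.antisymm, fun h => h ▸ le_rfl⟩)
          rfl rfl

lemma sum_powerset_neg_one_pow_mul_sum_powerset (g : Finset ι → R) (S : Finset ι) :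
    ∑ T ∈ S.powerset, (-1 : R) ^ (#S - #T) * ∑ U ∈ T.powerset, g U = g S := by
  simp_rw [Finset.mul_sum]
  rw [Finset.sum_comm' (t' := S.powerset) (s' := fun U => Finset.Icc U S) fun T U => by
    simp only [Finset.mem_powerset, Finset.mem_Icc]
    exact ⟨fun h => ⟨⟨h.2, h.1⟩, h.2.trans h.1⟩, fun h => ⟨h.1.2, h.1.1⟩⟩]
  calc ∑ U ∈ S.powerset, ∑ T ∈ Finset.Icc U S, (-1 : R) ^ (#S - #T) * g U
      = ∑ U ∈ S.powerset, (if U = S then g U else 0) := by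
        refine Finset.sum_congr rfl fun U hU => ?_
        rw [← Finset.sum_mul, sum_Icc_neg_one_pow_card_sub (Finset.mem_powerset.mp hU), ite_mul,
          one_mul, zero_mul]
    _ = g S := by simp

end PowersetInversion

section FlagH
variable {α : Type*} [PartialOrder α] [BoundedOrder α] [Finite α]
  {τ : α → α → α → Bool} {rk : α → ℕ} {n : ℕ} {S : Finset ℕ}

lemma flagH_eq_card_descSet_eq (hτ : IsTripleAssignment τ) (hg : IsGraded rk)
    (htop : rk ⊤ = n) (hS : S ⊆ Finset.Icc 1 (n - 1)) :
    flagH rk S = #{l ∈ satChains (⊥ : α) ⊤ | descSet τ l = S} := by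
  classical
  rw [flagH, ← sum_powerset_neg_one_pow_mul_sum_powerset
    (fun U => (#{l ∈ satChains (⊥ : α) ⊤ | descSet τ l = U} : ℤ)) S]
  refine Finset.sum_congr rfl fun T hT => ?_
  rw [flagF_eq_card_descSet_subset hτ hg htop ((Finset.mem_powerset.mp hT).trans hS),
    Finset.card_eq_sum_card_fiberwise (f := descSet τ) (t := T.powerset)
      fun l hl => Finset.mem_powerset.mpr (Finset.mem_filter.mp hl).2]
  push_cast
  congr 1
  refine Finset.sum_congr rfl fun U hU => ?_
  rw [Finset.filter_filter]
  congr 2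
  exact Finset.filter_congr fun l _ =>
    ⟨fun h => h.2, fun h => ⟨h ▸ Finset.mem_powerset.mp hU, h⟩⟩

end FlagH

/-- If a graded poset `P` admits a triple assignment `τ`, then its
𝐚𝐛-index equals the sum over all maximal chains `c` of the weight `wt(c)`, the
𝐚𝐛-monomial recording the values of `τ` on consecutive triples of `c`. -/
theorem abIndex_eq_sum_weights {α : Type*} [PartialOrder α] [BoundedOrder α] [Finite α]
    (rk : α → ℕ) (n : ℕ) (hg : IsGraded rk) (htop : rk ⊤ = n)
    (τ : α → α → α → Bool) (hτ : IsTripleAssignment τ) :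
    abIndex rk n = ∑ᶠ (l : List α) (_ : SatChain (⊥ : α) ⊤ l),
      MonoidAlgebra.single (chainWeight τ l) (1 : ℤ) := by
  classical
  have hlen : ∀ l ∈ satChains (⊥ : α) ⊤, l.length = n + 1 := fun l hl => by
    have := (mem_satChains.mp hl).rk_add_length hg.2
    rw [hg.1, htop] at this
    omega
  have hdesc : ∀ l ∈ satChains (⊥ : α) ⊤, descSet τ l ∈ (Finset.Icc 1 (n - 1)).powerset :=
    fun l hl => Finset.mem_powerset.mpr <| by simpa [hlen l hl] using descSet_subset_Icc τ l
  calc abIndex rk n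
      = ∑ S ∈ (Finset.Icc 1 (n - 1)).powerset, ∑ l ∈ satChains (⊥ : α) ⊤ with descSet τ l = S,
          MonoidAlgebra.single (abMonomial n S) (1 : ℤ) := by
        refine Finset.sum_congr rfl fun S hS => ?_
        rw [Finset.sum_const, MonoidAlgebra.smul_single, nsmul_one,
          flagH_eq_card_descSet_eq hτ hg htop (Finset.mem_powerset.mp hS)]
    _ = ∑ l ∈ satChains (⊥ : α) ⊤, MonoidAlgebra.single (chainWeight τ l) (1 : ℤ) := by
        rw [← Finset.sum_fiberwise_of_maps_to hdesc]
        refine Finset.sum_congr rfl fun S _ => Finset.sum_congr rfl fun l hl => ?_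
        obtain ⟨hl', rfl⟩ := Finset.mem_filter.mp hl
        rw [chainWeight_eq_abMonomial, hlen l hl', Nat.add_sub_cancel]
    _ = _ := (finsum_mem_eq_finite_toFinset_sum _ (finite_setOf_satChain ⊥ ⊤)).symm
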